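/- With notation as in the spectral representation formula (P^{-k} = UΛ^{-2k}Uᵀ for k ≥ 1, P^0 = I − UUᵀ, and S_k(E) the k-th order perturbation term), each term satisfies the bound ‖S_k(E)‖ ≤ binom(2k, k) · ‖E‖^k / λ_min^{2k} ≤ (4‖E‖/λ_min²)^k, where λ_min² is the smallest eigenvalue of Λ². -/

import Mathlib

open Matrix

/-- Spectral (operator) norm of a real matrix. -/
noncomputable def spec {m n : ℕ} (A : Matrix (Fin m) (Fin n) ℝ) : ℝ :=
  sSup {c : ℝ | ∃ v : Fin n → ℝ, (∑ j, v j ^ 2) ≤ 1 ∧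
    c = Real.sqrt (∑ i, (A.mulVec v i) ^ 2)}

/-- `P^{-s}`: for `s ≥ 1`, `P^{-s} = U Λ^{-2s} Uᵀ` (where `lam2 i = λᵢ²`), and
`P^{0} = I − UUᵀ`. -/
noncomputable def Pneg {p r : ℕ} (U : Matrix (Fin p) (Fin r) ℝ) (lam2 : Fin r → ℝ)
    (s : ℕ) : Matrix (Fin p) (Fin p) ℝ :=
  if s = 0 then 1 - U * Uᵀ
  else U * Matrix.diagonal (fun i => ((lam2 i) ^ s)⁻¹) * Uᵀ

/-- The `k`-th order perturbation term
`S_k(E) = Σ_{s₁+⋯+s_{k+1}=k} (−1)^{1+τ(s)} P^{-s₁} E P^{-s₂} E ⋯ E P^{-s_{k+1}}`. -/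
noncomputable def Sterm {p r : ℕ} (U : Matrix (Fin p) (Fin r) ℝ) (lam2 : Fin r → ℝ)
    (E : Matrix (Fin p) (Fin p) ℝ) (k : ℕ) : Matrix (Fin p) (Fin p) ℝ :=
  ∑ s ∈ Finset.univ.filter (fun s : Fin (k + 1) → Fin (k + 1) => ∑ j, (s j : ℕ) = k),
    ((-1 : ℝ) ^ (1 + (Finset.univ.filter fun j => (s j : ℕ) ≠ 0).card)) •
      ((List.ofFn fun j : Fin k => Pneg U lam2 (s j.castSucc : ℕ) * E).prod *
        Pneg U lam2 (s (Fin.last k) : ℕ))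

/-!
Every product `P^{-s₁} E ⋯ E P^{-s_{k+1}}` has norm at most `‖E‖^k λ_min^{-2(s₁+⋯+s_{k+1})} =
‖E‖^k / λ_min^{2k}`: `U` is an isometry, so `‖UΛ^{-2s}Uᵀ‖ ≤ λ_min^{-2s}`, and `I − UUᵀ` is an
orthogonal projection. The tuples `s` are the multiplicity vectors of the `k`-element multisets on
`k + 1` letters, of which there are `binom(2k, k) ≤ 4^k`.
-/

open Finset
open scoped Matrix.Norms.L2Operator

lemma norm_toLp_two_eq_sqrt_sum_sq {ι : Type*} [Fintype ι] (v : ι → ℝ) :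
    ‖WithLp.toLp 2 v‖ = √(∑ i, v i ^ 2) := by
  simp [EuclideanSpace.norm_eq]

lemma spec_eq_l2_opNorm {m n : ℕ} (A : Matrix (Fin m) (Fin n) ℝ) : spec A = ‖A‖ := by
  rw [l2_opNorm_def, ← ContinuousLinearMap.sSup_unitClosedBall_eq_norm]
  unfold spec
  congr 1
  ext c
  constructor
  · rintro ⟨v, hv, rfl⟩
    refine ⟨WithLp.toLp 2 v, ?_, ?_⟩
    · simpa [norm_toLp_two_eq_sqrt_sum_sq] using hv
    · simp [norm_toLp_two_eq_sqrt_sum_sq]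
  · rintro ⟨⟨v⟩, hv, rfl⟩
    refine ⟨v, ?_, ?_⟩
    · simpa [norm_toLp_two_eq_sqrt_sum_sq] using hv
    · simp [norm_toLp_two_eq_sqrt_sum_sq]

section Isometry

variable {𝕜 : Type*} [RCLike 𝕜] {m n : Type*} [Fintype m] [Fintype n] [DecidableEq n]
  {U : Matrix m n 𝕜}

lemma l2_opNorm_le_one_of_conjTranspose_mul_self_eq_one (hU : Uᴴ * U = 1) : ‖U‖ ≤ 1 := by
  have h := l2_opNorm_conjTranspose_mul_self U
  rw [hU] at h
  nlinarith [IsStarProjection.norm_le (1 : Matrix n n 𝕜) (.one _), norm_nonneg U]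

lemma isStarProjection_mul_conjTranspose_self (hU : Uᴴ * U = 1) :
    IsStarProjection (U * Uᴴ) where
  isIdempotentElem := by
    rw [IsIdempotentElem, Matrix.mul_assoc, ← Matrix.mul_assoc Uᴴ, hU, Matrix.one_mul]
  isSelfAdjoint := isHermitian_mul_conjTranspose_self U

end Isometry

lemma norm_Pneg_le {p r : ℕ} {U : Matrix (Fin p) (Fin r) ℝ} (hU : Uᵀ * U = 1)
    {lam2 : Fin r → ℝ} {lmin2 : ℝ} (hlmin2 : 0 < lmin2) (hlam2 : ∀ i, lmin2 ≤ lam2 i)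
    (s : ℕ) : ‖Pneg U lam2 s‖ ≤ lmin2⁻¹ ^ s := by
  rw [← conjTranspose_eq_transpose_of_trivial] at hU
  unfold Pneg
  rw [← conjTranspose_eq_transpose_of_trivial]
  split_ifs with hs
  · simpa [hs] using (isStarProjection_mul_conjTranspose_self hU).one_sub.norm_le
  · have hdiag : ‖diagonal fun i => (lam2 i ^ s)⁻¹‖ ≤ lmin2⁻¹ ^ s := by
      rw [l2_opNorm_diagonal]
      refine pi_norm_le_iff_of_nonneg (by positivity) |>.mpr fun i => ?_
      have hlam2_pos := hlmin2.trans_le (hlam2 i)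
      rw [Real.norm_of_nonneg (by positivity), ← inv_pow]
      gcongr
      exact hlam2 i
    have hU1 := l2_opNorm_le_one_of_conjTranspose_mul_self_eq_one hU
    calc ‖U * diagonal (fun i => (lam2 i ^ s)⁻¹) * Uᴴ‖
        ≤ ‖U‖ * ‖diagonal fun i => (lam2 i ^ s)⁻¹‖ * ‖Uᴴ‖ := by
          grw [l2_opNorm_mul, l2_opNorm_mul]
      _ ≤ 1 * lmin2⁻¹ ^ s * 1 := by
          rw [l2_opNorm_conjTranspose]
          gcongr
      _ = lmin2⁻¹ ^ s := by ring

lemma norm_list_prod_mul_le {R : Type*} [NormedRing R] (l : List R) (b : R) :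
    ‖l.prod * b‖ ≤ (l.map norm).prod * ‖b‖ := by
  induction l with
  | nil => simp
  | cons a l ih =>
    rw [List.prod_cons, mul_assoc, List.map_cons, List.prod_cons, mul_assoc]
    exact (norm_mul_le _ _).trans (by gcongr)

lemma norm_interlaced_product_le {R : Type*} [NormedRing R] {P : ℕ → R} {c : ℝ}
    (hP : ∀ s, ‖P s‖ ≤ c ^ s) (E : R) {k : ℕ} (s : Fin (k + 1) → ℕ) :
    ‖(List.ofFn fun j : Fin k => P (s j.castSucc) * E).prod * P (s (Fin.last k))‖
      ≤ ‖E‖ ^ k * c ^ ∑ j, s j := by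
  have hc : 0 ≤ c := by simpa using (norm_nonneg _).trans (hP 1)
  calc _ ≤ (∏ j : Fin k, ‖P (s j.castSucc) * E‖) * ‖P (s (Fin.last k))‖ := by
        refine (norm_list_prod_mul_le _ _).trans_eq ?_
        rw [List.map_ofFn, List.prod_ofFn]
        rfl
    _ ≤ (∏ j : Fin k, c ^ s j.castSucc * ‖E‖) * c ^ s (Fin.last k) := by
        gcongr with j
        · exact (norm_mul_le _ _).trans (by gcongr; exact hP _)
        · exact hP _
    _ = ‖E‖ ^ k * c ^ ∑ j, s j := by
        rw [Fin.sum_univ_castSucc, pow_add, prod_mul_distrib, prod_pow_eq_pow_sum, prod_const,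
          card_univ, Fintype.card_fin]
        ring

lemma card_tuples_sum_eq_le_choose (k : ℕ) :
    #{s : Fin (k + 1) → Fin (k + 1) | ∑ j, (s j : ℕ) = k} ≤ (2 * k).choose k := by
  calc #{s : Fin (k + 1) → Fin (k + 1) | ∑ j, (s j : ℕ) = k}
      ≤ #(piAntidiag (univ : Finset (Fin (k + 1))) k) := by
        refine card_le_card_of_injOn (fun s j => (s j : ℕ)) ?_ ?_
        · intro s hs
          simpa using hs
        · intro s _ t _ hst
          funext j
          exact Fin.ext (congrFun hst j)
    _ = (2 * k).choose k := by
        rw [← map_sym_eq_piAntidiag, card_map, sym_univ, card_univ, Sym.card_sym_eq_choose,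
          Fintype.card_fin]
        congr 1
        omega

lemma norm_Sterm_le {p r : ℕ} {U : Matrix (Fin p) (Fin r) ℝ} (hU : Uᵀ * U = 1)
    {lam2 : Fin r → ℝ} {lmin2 : ℝ} (hlmin2 : 0 < lmin2) (hlam2 : ∀ i, lmin2 ≤ lam2 i)
    (E : Matrix (Fin p) (Fin p) ℝ) (k : ℕ) :
    ‖Sterm U lam2 E k‖ ≤ (2 * k).choose k * ‖E‖ ^ k / lmin2 ^ k := by
  have hterm : ∀ s ∈ ({s : Fin (k + 1) → Fin (k + 1) | ∑ j, (s j : ℕ) = k} : Finset _),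
      ‖((-1 : ℝ) ^ (1 + #{j | (s j : ℕ) ≠ 0})) •
        ((List.ofFn fun j : Fin k => Pneg U lam2 (s j.castSucc : ℕ) * E).prod *
          Pneg U lam2 (s (Fin.last k) : ℕ))‖ ≤ ‖E‖ ^ k * lmin2⁻¹ ^ k := by
    intro s hs
    rw [norm_smul, norm_pow, norm_neg, norm_one, one_pow, one_mul]
    have h := norm_interlaced_product_le (norm_Pneg_le hU hlmin2 hlam2) E fun j => (s j : ℕ)
    rwa [(mem_filter.1 hs).2] at h
  calc ‖Sterm U lam2 E k‖
      ≤ #{s : Fin (k + 1) → Fin (k + 1) | ∑ j, (s j : ℕ) = k} • (‖E‖ ^ k * lmin2⁻¹ ^ k) :=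
        (norm_sum_le_of_le _ hterm).trans_eq (sum_const _)
    _ ≤ (2 * k).choose k • (‖E‖ ^ k * lmin2⁻¹ ^ k) := by
        gcongr
        exact card_tuples_sum_eq_le_choose k
    _ = (2 * k).choose k * ‖E‖ ^ k / lmin2 ^ k := by
        rw [nsmul_eq_mul, inv_pow, div_eq_mul_inv, mul_assoc]

theorem stmt10_general (p r k : ℕ)
    (U : Matrix (Fin p) (Fin r) ℝ) (hU : Uᵀ * U = 1)
    (lam2 : Fin r → ℝ) (lmin2 : ℝ) (hlmin2 : 0 < lmin2)
    (hlam2 : ∀ i, lmin2 ≤ lam2 i)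
    (E : Matrix (Fin p) (Fin p) ℝ) :
    spec (Sterm U lam2 E k) ≤ (Nat.choose (2 * k) k : ℝ) * spec E ^ k / lmin2 ^ k ∧
    spec (Sterm U lam2 E k) ≤ (4 * spec E / lmin2) ^ k := by
  rw [spec_eq_l2_opNorm, spec_eq_l2_opNorm]
  have h := norm_Sterm_le hU hlmin2 hlam2 E k
  have hcentral : ((2 * k).choose k : ℝ) ≤ 4 ^ k := by
    exact_mod_cast Nat.centralBinom_eq_two_mul_choose k ▸ Nat.centralBinom_le_four_pow k
  refine ⟨h, h.trans ?_⟩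
  rw [div_pow, mul_pow]
  gcongr

/-- Bound on the `k`-th order perturbation term:
`‖S_k(E)‖ ≤ C(2k,k)·‖E‖^k/λ_min^{2k} ≤ (4‖E‖/λ_min²)^k`, where `λ_min²` is the smallest
eigenvalue of `Λ²` (here `lmin2`, with `lam2 i = λᵢ²`). -/
theorem stmt10 (p r k : ℕ) (hk : 1 ≤ k)
    (U : Matrix (Fin p) (Fin r) ℝ) (hU : Uᵀ * U = 1)
    (lam2 : Fin r → ℝ) (lmin2 : ℝ) (hlmin2 : 0 < lmin2)
    (hlam2 : ∀ i, lmin2 ≤ lam2 i)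
    (E : Matrix (Fin p) (Fin p) ℝ) :
    spec (Sterm U lam2 E k) ≤ (Nat.choose (2 * k) k : ℝ) * spec E ^ k / lmin2 ^ k ∧
    spec (Sterm U lam2 E k) ≤ (4 * spec E / lmin2) ^ k :=
  stmt10_general p r k U hU lam2 lmin2 hlmin2 hlam2 E
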